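/- arXiv:2307.03622 — 2 statements merged into one kernel-verified Lean document; each statement's English description precedes it below -/
import Mathlib

section
/- Let X be a real Banach space. The norm of the dual space X* is average non rough if and only if X has the Ball Small Combination of Slice Property (BSCSP). -/
open Metric NormedSpace ENNReal

section Defs

variable (Z : Type*) [NormedAddCommGroup Z] [NormedSpace ℝ Z]

/-- The w*-slice of the closed unit ball of the dual of `Z` determined by `z : Z` and `α > 0`:
`S(B_{Z*}, z, α) = {f ∈ B_{Z*} : f(z) > sup_{g ∈ B_{Z*}} g(z) − α}`. -/
def wStarSlice (z : Z) (α : ℝ) : Set (StrongDual ℝ Z) :=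
  {f | f ∈ closedBall (0 : StrongDual ℝ Z) 1 ∧
    f z > sSup ((fun g : StrongDual ℝ Z => g z) '' closedBall (0 : StrongDual ℝ Z) 1) - α}

/-- The norm of `Z` is `ε`-rough: every w*-slice of `B_{Z*}` has diameter at least `ε`. -/
def EpsRough (ε : ℝ) : Prop :=
  ∀ (z : Z) (α : ℝ), 0 < α → ε ≤ diam (wStarSlice Z z α)

/-- The norm of `Z` is non rough: it is not `ε`-rough for any `ε > 0`. -/
def NonRough : Prop := ∀ ε > 0, ¬ EpsRough Z ε

/-- `Z*` has the w*-Ball Dentable Property. -/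
def WStarBDP : Prop :=
  ∀ ε > 0, ∃ (z : Z) (α : ℝ), 0 < α ∧ diam (wStarSlice Z z α) < ε

/-- `V` is a (relatively) w*-open subset of the closed unit ball `B_{Z*}`. -/
def IsRelWStarOpen (V : Set (StrongDual ℝ Z)) : Prop :=
  ∃ U : Set (WeakDual ℝ Z), IsOpen U ∧
    V = {f | f ∈ closedBall (0 : StrongDual ℝ Z) 1 ∧ StrongDual.toWeakDual f ∈ U}

/-- The norm of `Z` is weakly `ε`-average rough: every nonempty relatively w*-open
subset of `B_{Z*}` has diameter at least `ε`. -/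
def WeaklyEpsAvgRough (ε : ℝ) : Prop :=
  ∀ V : Set (StrongDual ℝ Z), IsRelWStarOpen Z V → V.Nonempty → ε ≤ diam V

/-- The norm of `Z` is weakly average non rough. -/
def WeaklyAvgNonRough : Prop := ∀ ε > 0, ¬ WeaklyEpsAvgRough Z ε

/-- `Z*` has the w*-Ball Huskable Property. -/
def WStarBHP : Prop :=
  ∀ ε > 0, ∃ V : Set (StrongDual ℝ Z), IsRelWStarOpen Z V ∧ V.Nonempty ∧ diam V < ε

/-- `D` is a convex combination of w*-slices of `B_{Z*}`, i.e. `D = ∑ λᵢ Sᵢ` (Minkowski sum)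
with each `Sᵢ` a w*-slice, `λᵢ > 0`, `∑ λᵢ = 1`. -/
def IsConvexCombWStarSlices (D : Set (StrongDual ℝ Z)) : Prop :=
  ∃ (n : ℕ) (l : Fin n → ℝ) (z : Fin n → Z) (α : Fin n → ℝ),
    (∀ i, 0 < l i) ∧ (∑ i, l i) = 1 ∧ (∀ i, 0 < α i) ∧
    D = {f | ∃ g : Fin n → StrongDual ℝ Z,
      (∀ i, g i ∈ wStarSlice Z (z i) (α i)) ∧ f = ∑ i, l i • g i}

/-- The norm of `Z` is `ε`-average rough: every convex combination of w*-slices of `B_{Z*}`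
has diameter at least `ε`. -/
def EpsAvgRough (ε : ℝ) : Prop :=
  ∀ D : Set (StrongDual ℝ Z), IsConvexCombWStarSlices Z D → ε ≤ diam D

/-- The norm of `Z` is average non rough. -/
def AvgNonRough : Prop := ∀ ε > 0, ¬ EpsAvgRough Z ε

/-- `Z*` has the w*-Ball Small Combination of Slice Property. -/
def WStarBSCSP : Prop :=
  ∀ ε > 0, ∃ D : Set (StrongDual ℝ Z), IsConvexCombWStarSlices Z D ∧ diam D < ε

/-- A slice of the closed unit ball `B_Z` determined by `f ∈ Z*` and `α > 0`. -/
def ballSlice (f : StrongDual ℝ Z) (α : ℝ) : Set Z :=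
  {x | x ∈ closedBall (0 : Z) 1 ∧ f x > sSup (f '' closedBall (0 : Z) 1) - α}

/-- `Z` has the Ball Dentable Property. -/
def BDP : Prop :=
  ∀ ε > 0, ∃ (f : StrongDual ℝ Z) (α : ℝ), 0 < α ∧ diam (ballSlice Z f α) < ε

/-- `V` is a nonempty relatively weakly open subset of the closed unit ball `B_Z`. -/
def IsRelWeakOpen (V : Set Z) : Prop :=
  ∃ U : Set (WeakSpace ℝ Z), IsOpen U ∧
    V = {x | x ∈ closedBall (0 : Z) 1 ∧ toWeakSpace ℝ Z x ∈ U}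

/-- `Z` has the Ball Huskable Property. -/
def BHP : Prop :=
  ∀ ε > 0, ∃ V : Set Z, IsRelWeakOpen Z V ∧ V.Nonempty ∧ diam V < ε

/-- `D` is a convex combination of slices of `B_Z`. -/
def IsConvexCombSlices (D : Set Z) : Prop :=
  ∃ (n : ℕ) (l : Fin n → ℝ) (f : Fin n → StrongDual ℝ Z) (α : Fin n → ℝ),
    (∀ i, 0 < l i) ∧ (∑ i, l i) = 1 ∧ (∀ i, 0 < α i) ∧
    D = {x | ∃ g : Fin n → Z,
      (∀ i, g i ∈ ballSlice Z (f i) (α i)) ∧ x = ∑ i, l i • g i}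

/-- `Z` has the Ball Small Combination of Slice Property. -/
def BSCSP : Prop :=
  ∀ ε > 0, ∃ D : Set Z, IsConvexCombSlices Z D ∧ diam D < ε

variable {Z}

/-- The closed unit ball of a subspace `F` of the dual, viewed as a subset of the dual. -/
def subBall (F : Submodule ℝ (StrongDual ℝ Z)) : Set (StrongDual ℝ Z) :=
  {f | f ∈ F ∧ ‖f‖ ≤ 1}

/-- The w*-slice of `B_F` determined by `z : Z` and `α`. -/
def subWStarSlice (F : Submodule ℝ (StrongDual ℝ Z)) (z : Z) (α : ℝ) : Set (StrongDual ℝ Z) :=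
  {f | f ∈ subBall F ∧ f z > sSup ((fun g : StrongDual ℝ Z => g z) '' subBall F) - α}

/-- The subspace `F` of `Z*` has the w*-Ball Dentable Property. -/
def SubWStarBDP (F : Submodule ℝ (StrongDual ℝ Z)) : Prop :=
  ∀ ε > 0, ∃ (z : Z) (α : ℝ), 0 < α ∧ diam (subWStarSlice F z α) < ε

/-- `V` is a relatively w*-open subset of `B_F`. -/
def IsRelWStarOpenSub (F : Submodule ℝ (StrongDual ℝ Z)) (V : Set (StrongDual ℝ Z)) : Prop :=
  ∃ U : Set (WeakDual ℝ Z), IsOpen U ∧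
    V = {f | f ∈ subBall F ∧ StrongDual.toWeakDual f ∈ U}

/-- The subspace `F` of `Z*` has the w*-Ball Huskable Property. -/
def SubWStarBHP (F : Submodule ℝ (StrongDual ℝ Z)) : Prop :=
  ∀ ε > 0, ∃ V : Set (StrongDual ℝ Z), IsRelWStarOpenSub F V ∧ V.Nonempty ∧ diam V < ε

/-- `D` is a convex combination of w*-slices of `B_F`. -/
def IsConvexCombSubWStarSlices (F : Submodule ℝ (StrongDual ℝ Z)) (D : Set (StrongDual ℝ Z)) : Prop :=
  ∃ (n : ℕ) (l : Fin n → ℝ) (z : Fin n → Z) (α : Fin n → ℝ),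
    (∀ i, 0 < l i) ∧ (∑ i, l i) = 1 ∧ (∀ i, 0 < α i) ∧
    D = {f | ∃ g : Fin n → StrongDual ℝ Z,
      (∀ i, g i ∈ subWStarSlice F (z i) (α i)) ∧ f = ∑ i, l i • g i}

/-- The subspace `F` of `Z*` has the w*-Ball Small Combination of Slice Property. -/
def SubWStarBSCSP (F : Submodule ℝ (StrongDual ℝ Z)) : Prop :=
  ∀ ε > 0, ∃ D : Set (StrongDual ℝ Z), IsConvexCombSubWStarSlices F D ∧ diam D < ε

/-- The annihilator `Y^⊥ = {f ∈ Z* : f(y) = 0 for all y ∈ Y}` of a subspace `Y` of `Z`. -/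
noncomputable def annih (Y : Submodule ℝ Z) : Submodule ℝ (StrongDual ℝ Z) where
  carrier := {f | ∀ y ∈ Y, f y = 0}
  add_mem' := by intro f g hf hg y hy; simp [hf y hy, hg y hy]
  zero_mem' := by intro y hy; simp
  smul_mem' := by intro c f hf y hy; simp [hf y hy]

end Defs

/-!
The canonical isometry `J : X → X**` maps each slice `S(B_X, f, α)` into the w*-slice
`S(B_{X**}, f, α)`, and by (a finite-dimensional form of) Goldstine's theorem its image is
w*-dense there. As the bidual norm is w*-lower semicontinuous, a convex combination of slices of
`B_X` and the same combination of w*-slices of `B_{X**}` have equal diameters, so either family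
contains sets of arbitrarily small diameter exactly when the other does.
-/

open Set

section UnitBall

variable {E : Type*} [NormedAddCommGroup E] [NormedSpace ℝ E]

theorem sSup_image_closedBall_eq_norm (f : StrongDual ℝ E) :
    sSup (f '' closedBall (0 : E) 1) = ‖f‖ := by
  refine csSup_eq_of_forall_le_of_forall_lt_exists_gt
    ((nonempty_closedBall.mpr zero_le_one).image _) ?_ fun r hr => ?_
  · rintro - ⟨x, hx, rfl⟩
    exact (le_abs_self _).trans (f.unit_le_opNorm x (mem_closedBall_zero_iff.mp hx))
  · obtain ⟨x, hx, hrx⟩ := f.exists_lt_apply_of_lt_opNorm hr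
    rcases lt_abs.mp hrx with hpos | hneg
    · exact ⟨f x, ⟨x, mem_closedBall_zero_iff.mpr hx.le, rfl⟩, hpos⟩
    · exact ⟨f (-x), ⟨-x, mem_closedBall_zero_iff.mpr (by rw [norm_neg]; exact hx.le), rfl⟩,
        by simpa using hneg⟩

theorem sSup_eval_image_closedBall_eq_norm (z : E) :
    sSup ((fun g : StrongDual ℝ E => g z) '' closedBall (0 : StrongDual ℝ E) 1) = ‖z‖ := by
  rw [← (inclusionInDoubleDualLi ℝ).norm_map z, ← sSup_image_closedBall_eq_norm]
  rfl

theorem mem_wStarSlice_iff {z : E} {α : ℝ} {f : StrongDual ℝ E} :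
    f ∈ wStarSlice E z α ↔ ‖f‖ ≤ 1 ∧ ‖z‖ - α < f z := by
  rw [wStarSlice, mem_ofPred_eq, mem_closedBall_zero_iff, sSup_eval_image_closedBall_eq_norm]

theorem mem_ballSlice_iff {f : StrongDual ℝ E} {α : ℝ} {x : E} :
    x ∈ ballSlice E f α ↔ ‖x‖ ≤ 1 ∧ ‖f‖ - α < f x := by
  rw [ballSlice, mem_ofPred_eq, mem_closedBall_zero_iff, sSup_image_closedBall_eq_norm]

end UnitBall

section Goldstine

variable {X : Type*} [NormedAddCommGroup X] [NormedSpace ℝ X]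

theorem mem_closure_pi_image_closedBall {ι : Type*} [Fintype ι]
    {F : StrongDual ℝ (StrongDual ℝ X)} (hF : ‖F‖ ≤ 1) (h : ι → StrongDual ℝ X) :
    (fun j => F (h j)) ∈ closure (ContinuousLinearMap.pi h '' closedBall (0 : X) 1) := by
  classical
  by_contra hc
  obtain ⟨φ, u, hφu, huφ⟩ := geometric_hahn_banach_closed_point
    (((convex_closedBall (0 : X) 1).linear_image _).closure) isClosed_closure hc
  -- `φ ∘ pi h` is the functional `g = ∑ φ(eⱼ) hⱼ`, on which `F` takes the value `φ (F ∘ h)`.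
  set g : StrongDual ℝ X := ∑ j, φ (fun k => if j = k then 1 else 0) • h j
  have hφ (v : ι → ℝ) : φ v = ∑ j, v j * φ (fun k => if j = k then 1 else 0) :=
    φ.toLinearMap.pi_apply_eq_sum_univ v
  have hg : ‖g‖ ≤ u := by
    rw [← sSup_image_closedBall_eq_norm]
    refine csSup_le ((nonempty_closedBall.mpr zero_le_one).image _) ?_
    rintro - ⟨x, hx, rfl⟩
    have := hφu _ (subset_closure (mem_image_of_mem _ hx))
    rw [hφ] at this
    simpa [g, mul_comm] using this.le
  have hFg : F g = φ fun j => F (h j) := by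
    rw [hφ]
    simp [g, mul_comm]
  have : F g ≤ u := (le_abs_self _).trans <|
    (F.le_opNorm g).trans ((mul_le_of_le_one_left (norm_nonneg g) hF).trans hg)
  linarith

theorem exists_mem_closedBall_forall_abs_sub_lt {ι : Type*} [Fintype ι]
    {F : StrongDual ℝ (StrongDual ℝ X)} (hF : ‖F‖ ≤ 1) (h : ι → StrongDual ℝ X)
    {δ : ℝ} (hδ : 0 < δ) : ∃ x ∈ closedBall (0 : X) 1, ∀ j, |F (h j) - h j x| < δ := by
  obtain ⟨-, ⟨x, hx, rfl⟩, hdist⟩ :=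
    Metric.mem_closure_iff.mp (mem_closure_pi_image_closedBall hF h) δ hδ
  exact ⟨x, hx, fun j => (dist_le_pi_dist _ _ j).trans_lt hdist⟩

end Goldstine

section Slices

variable {X : Type*} [NormedAddCommGroup X] [NormedSpace ℝ X]

theorem inclusionInDoubleDualLi_mem_wStarSlice {f : StrongDual ℝ X} {α : ℝ} {x : X}
    (hx : x ∈ ballSlice X f α) :
    inclusionInDoubleDualLi ℝ x ∈ wStarSlice (StrongDual ℝ X) f α := by
  rw [mem_ballSlice_iff] at hx
  rw [mem_wStarSlice_iff, LinearIsometry.norm_map]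
  exact hx

theorem exists_mem_ballSlice_abs_sub_lt {f : StrongDual ℝ X} {α : ℝ}
    {F : StrongDual ℝ (StrongDual ℝ X)} (hF : F ∈ wStarSlice (StrongDual ℝ X) f α)
    (φ : StrongDual ℝ X) {δ : ℝ} (hδ : 0 < δ) :
    ∃ x ∈ ballSlice X f α, |F φ - φ x| < δ := by
  rw [mem_wStarSlice_iff] at hF
  obtain ⟨x, hx, hxF⟩ := exists_mem_closedBall_forall_abs_sub_lt hF.1 ![f, φ]
    (lt_min hδ (sub_pos.mpr hF.2))
  have hf := (le_abs_self _).trans_lt ((hxF 0).trans_le (min_le_right _ _))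
  have hφ := (hxF 1).trans_le (min_le_left _ _)
  simp only [Matrix.cons_val_zero, Matrix.cons_val_one] at hf hφ
  exact ⟨x, mem_ballSlice_iff.mpr ⟨mem_closedBall_zero_iff.mp hx, by linarith⟩, hφ⟩

end Slices

section ConvexCombination

variable {E E' : Type*} {n : ℕ} {l : Fin n → ℝ}

/-- The Minkowski combination `∑ lᵢ • Sᵢ`; `IsConvexCombSlices` and `IsConvexCombWStarSlices`
describe sets of this form. -/
def convexCombSet [AddCommMonoid E] [Module ℝ E] (l : Fin n → ℝ) (S : Fin n → Set E) : Set E :=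
  {x | ∃ g : Fin n → E, (∀ i, g i ∈ S i) ∧ x = ∑ i, l i • g i}

theorem convexCombSet_subset_closedBall [SeminormedAddCommGroup E] [NormedSpace ℝ E]
    (hl : ∀ i, 0 ≤ l i) (hsum : ∑ i, l i = 1) {S : Fin n → Set E}
    (hS : ∀ i, S i ⊆ closedBall 0 1) : convexCombSet l S ⊆ closedBall 0 1 := by
  rintro - ⟨g, hg, rfl⟩
  exact (convex_closedBall 0 1).sum_mem (fun i _ => hl i) hsum fun i _ => hS i (hg i)

theorem image_convexCombSet_subset [AddCommMonoid E] [Module ℝ E] [AddCommMonoid E']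
    [Module ℝ E'] (L : E →ₗ[ℝ] E') {S : Fin n → Set E} {T : Fin n → Set E'}
    (hST : ∀ i, MapsTo L (S i) (T i)) : L '' convexCombSet l S ⊆ convexCombSet l T := by
  rintro - ⟨-, ⟨g, hg, rfl⟩, rfl⟩
  exact ⟨fun i => L (g i), fun i => hST i (hg i), by simp [map_sum]⟩

theorem exists_mem_convexCombSet_abs_sub_le [AddCommMonoid E] [Module ℝ E] [AddCommMonoid E']
    [Module ℝ E'] (hl : ∀ i, 0 ≤ l i) (hsum : ∑ i, l i = 1) (p : E →ₗ[ℝ] ℝ) (q : E' →ₗ[ℝ] ℝ)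
    {S : Fin n → Set E} {T : Fin n → Set E'} {δ : ℝ}
    (hST : ∀ i, ∀ a ∈ S i, ∃ b ∈ T i, |p a - q b| < δ) :
    ∀ a ∈ convexCombSet l S, ∃ b ∈ convexCombSet l T, |p a - q b| ≤ δ := by
  rintro - ⟨g, hg, rfl⟩
  choose b hbT hb using fun i => hST i (g i) (hg i)
  refine ⟨∑ i, l i • b i, ⟨b, hbT, rfl⟩, ?_⟩
  calc |p (∑ i, l i • g i) - q (∑ i, l i • b i)| = |∑ i, l i * (p (g i) - q (b i))| := by
        simp [map_sum, mul_sub, Finset.sum_sub_distrib]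
    _ ≤ ∑ i, l i * δ := by
        refine (Finset.abs_sum_le_sum_abs _ _).trans (Finset.sum_le_sum fun i _ => ?_)
        rw [abs_mul, abs_of_nonneg (hl i)]
        exact mul_le_mul_of_nonneg_left (hb i).le (hl i)
    _ = δ := by rw [← Finset.sum_mul, hsum, one_mul]

end ConvexCombination

section Diameter

variable {X : Type*} [NormedAddCommGroup X] [NormedSpace ℝ X]

/-- The bidual norm is the supremum of the w*-continuous maps `F ↦ |F φ|`, `‖φ‖ = 1`, so it
suffices to approximate each value `F φ` from `B`. -/
theorem diam_le_of_forall_abs_apply_sub_le {A : Set (StrongDual ℝ (StrongDual ℝ X))} {B : Set X}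
    (hB : Bornology.IsBounded B)
    (hAB : ∀ F ∈ A, ∀ φ : StrongDual ℝ X, ∀ δ > 0, ∃ x ∈ B, |F φ - φ x| ≤ δ) :
    diam A ≤ diam B := by
  refine diam_le_of_forall_dist_le diam_nonneg fun F hF G hG => ?_
  rw [dist_eq_norm (E := StrongDual ℝ (StrongDual ℝ X))]
  refine ContinuousLinearMap.opNorm_le_of_unit_norm diam_nonneg fun φ hφ => ?_
  refine le_of_forall_pos_le_add fun δ hδ => ?_
  obtain ⟨x, hxB, hx⟩ := hAB F hF φ (δ / 2) (half_pos hδ)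
  obtain ⟨y, hyB, hy⟩ := hAB G hG φ (δ / 2) (half_pos hδ)
  have hxy : |φ x - φ y| ≤ diam B := by
    rw [← map_sub]
    calc ‖φ (x - y)‖ ≤ ‖φ‖ * ‖x - y‖ := φ.le_opNorm _
      _ = dist x y := by rw [hφ, one_mul, dist_eq_norm]
      _ ≤ diam B := dist_le_diam_of_mem hB hxB hyB
  rw [Real.norm_eq_abs, sub_apply]
  rw [abs_le] at hx hy hxy ⊢
  constructor <;> linarith

theorem diam_convexCombSet_wStarSlice_eq {n : ℕ} {l : Fin n → ℝ} (hl : ∀ i, 0 ≤ l i)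
    (hsum : ∑ i, l i = 1) (f : Fin n → StrongDual ℝ X) (α : Fin n → ℝ) :
    diam (convexCombSet l fun i => wStarSlice (StrongDual ℝ X) (f i) (α i)) =
      diam (convexCombSet l fun i => ballSlice X (f i) (α i)) := by
  apply le_antisymm
  · refine diam_le_of_forall_abs_apply_sub_le (isBounded_closedBall.subset
    (convexCombSet_subset_closedBall hl hsum fun i _ hx => hx.1)) fun F hF φ δ hδ => ?_
    exact exists_mem_convexCombSet_abs_sub_le hl hsum (inclusionInDoubleDual ℝ _ φ).toLinearMap
      φ.toLinearMap (fun i _ hG => exists_mem_ballSlice_abs_sub_lt hG φ hδ) F hF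
  · rw [← (inclusionInDoubleDualLi ℝ).diam_image]
    exact diam_mono (image_convexCombSet_subset (inclusionInDoubleDualLi ℝ).toLinearMap
      fun i _ => inclusionInDoubleDualLi_mem_wStarSlice) (isBounded_closedBall.subset
      (convexCombSet_subset_closedBall hl hsum fun i _ hF => hF.1))

end Diameter

theorem statement_5_general (X : Type*) [NormedAddCommGroup X] [NormedSpace ℝ X] :
    AvgNonRough (StrongDual ℝ X) ↔ BSCSP X := by
  refine forall₂_congr fun ε _ => ?_
  simp only [EpsAvgRough, not_forall, not_le, exists_prop]
  constructor
  · rintro ⟨-, ⟨n, l, f, α, hl, hsum, hα, rfl⟩, hD⟩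
    exact ⟨_, ⟨n, l, f, α, hl, hsum, hα, rfl⟩,
      (diam_convexCombSet_wStarSlice_eq (fun i => (hl i).le) hsum f α).symm.trans_lt hD⟩
  · rintro ⟨-, ⟨n, l, f, α, hl, hsum, hα, rfl⟩, hD⟩
    exact ⟨_, ⟨n, l, f, α, hl, hsum, hα, rfl⟩,
      (diam_convexCombSet_wStarSlice_eq (fun i => (hl i).le) hsum f α).trans_lt hD⟩

/-- The norm of `X*` is average non rough if and only if `X` has the Ball Small
Combination of Slice Property. -/
theorem statement_5 (X : Type*) [NormedAddCommGroup X] [NormedSpace ℝ X] [CompleteSpace X] :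
    AvgNonRough (StrongDual ℝ X) ↔ BSCSP X :=
  statement_5_general X
end

section
/- Let X be a real Banach space and Y a finite-dimensional subspace of X. If the norm of the quotient space X/Y is weakly average non rough, then the norm of X is weakly average non rough. -/
open Metric NormedSpace ENNReal

/-!
A small nonempty relatively w*-open set `V ⊆ B_{(X/Y)*}` is pulled back to `B_{X*}`. Since the
unit ball of `Y` is compact, a functional `f ∈ B_{X*}` that is small on a finite net of it has
small restriction to `Y`; by Hahn–Banach `f` is then norm-close to `g ∘ Q` for some
`g ∈ B_{(X/Y)*}`, where `Q : X → X/Y` is the quotient map. Finitely many further w*-conditions on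
`f` force this `g` into `V`, so these conditions cut out a nonempty relatively w*-open subset of
`B_{X*}` whose diameter exceeds `diam V` by an arbitrarily small amount.
-/

open Topology

theorem exists_norm_le_one_norm_sub_le {E : Type*} [SeminormedAddCommGroup E] [NormedSpace ℝ E]
    {x : E} {s : ℝ} (hs : 0 ≤ s) (hx : ‖x‖ ≤ 1 + s) : ∃ y : E, ‖y‖ ≤ 1 ∧ ‖x - y‖ ≤ s := by
  have h1s : 0 < 1 + s := by linarith
  refine ⟨(1 + s)⁻¹ • x, ?_, ?_⟩
  · rw [norm_smul, Real.norm_of_nonneg (inv_nonneg.2 h1s.le)]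
    exact inv_mul_le_one_of_le₀ hx h1s.le
  · have hsx : x - (1 + s)⁻¹ • x = (s / (1 + s)) • x := by
      rw [show s / (1 + s) = 1 - (1 + s)⁻¹ by field_simp; ring, sub_smul, one_smul]
    rw [hsx, norm_smul, Real.norm_of_nonneg (by positivity)]
    calc s / (1 + s) * ‖x‖ ≤ s / (1 + s) * (1 + s) := by gcongr
      _ = s := by field_simp

theorem exists_finite_forall_norm_lt_imp_norm_le {E : Type*} [NormedAddCommGroup E]
    [NormedSpace ℝ E] [ProperSpace E] {η : ℝ} (hη : 0 < η) :
    ∃ t : Set E, t.Finite ∧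
      ∀ φ : StrongDual ℝ E, ‖φ‖ ≤ 1 → (∀ y ∈ t, ‖φ y‖ < η) → ‖φ‖ ≤ 2 * η := by
  obtain ⟨t, -, ht, hcover⟩ := finite_cover_balls_of_compact (isCompact_closedBall (0 : E) 1) hη
  refine ⟨t, ht, fun φ hφ hsmall => φ.opNorm_le_of_unit_norm (by positivity) fun u hu => ?_⟩
  obtain ⟨y, hy, huy⟩ := Set.mem_iUnion₂.mp (hcover (mem_closedBall_zero_iff.2 hu.le))
  calc ‖φ u‖ = ‖φ (u - y) + φ y‖ := by rw [map_sub, sub_add_cancel]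
    _ ≤ ‖φ‖ * ‖u - y‖ + ‖φ y‖ := norm_add_le_of_le (φ.le_opNorm _) le_rfl
    _ ≤ 1 * η + η := by
        gcongr
        · exact (mem_ball_iff_norm.1 huy).le
        · exact (hsmall y hy).le
    _ = 2 * η := by ring

theorem Metric.diam_le_of_forall_exists_dist_le {α β : Type*} [PseudoMetricSpace α]
    [PseudoMetricSpace β] {φ : β → α} (hφ : LipschitzWith 1 φ) {s : Set β}
    (hs : Bornology.IsBounded s) {t : Set α} {r : ℝ} (hr : 0 ≤ r)
    (h : ∀ x ∈ t, ∃ y ∈ s, dist x (φ y) ≤ r) : diam t ≤ diam s + 2 * r := by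
  refine diam_le_of_forall_dist_le (add_nonneg diam_nonneg (by positivity)) fun x₁ hx₁ x₂ hx₂ => ?_
  obtain ⟨y₁, hy₁, h₁⟩ := h x₁ hx₁
  obtain ⟨y₂, hy₂, h₂⟩ := h x₂ hx₂
  have hφy : dist (φ y₁) (φ y₂) ≤ dist y₁ y₂ := by simpa using hφ.dist_le_mul y₁ y₂
  calc dist x₁ x₂ ≤ dist x₁ (φ y₁) + dist (φ y₁) (φ y₂) + dist (φ y₂) x₂ := dist_triangle4 _ _ _ _
    _ ≤ r + diam s + r := by
        gcongr
        · exact hφy.trans (dist_le_diam_of_mem hs hy₁ hy₂)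
        · rwa [dist_comm]
    _ = diam s + 2 * r := by ring

theorem WeakDual.exists_finset_norm_sub_lt_subset {𝕜 E : Type*} [NormedField 𝕜] [AddCommGroup E]
    [Module 𝕜 E] [TopologicalSpace E] {U : Set (WeakDual 𝕜 E)} (hU : IsOpen U)
    {g₀ : WeakDual 𝕜 E} (hg₀ : g₀ ∈ U) :
    ∃ (s : Finset E) (δ : ℝ), 0 < δ ∧ {g : WeakDual 𝕜 E | ∀ z ∈ s, ‖g z - g₀ z‖ < δ} ⊆ U := by
  obtain ⟨s, δ, hδ, hsub⟩ :=
    ((topDualPairing 𝕜 E).weakBilin_withSeminorms.mem_nhds_iff g₀ U).mp (hU.mem_nhds hg₀)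
  exact ⟨s, δ, hδ, fun g hg =>
    hsub ((Seminorm.mem_ball _).2 (Seminorm.finset_sup_apply_lt hδ fun z hz => hg z hz))⟩

theorem exists_isOpen_forall_norm_sub_comp_lt_imp_mem {𝕜 X Z : Type*} [NontriviallyNormedField 𝕜]
    [SeminormedAddCommGroup X] [NormedSpace 𝕜 X] [SeminormedAddCommGroup Z] [NormedSpace 𝕜 Z]
    {T : X →L[𝕜] Z} (hT : Function.Surjective T) {U : Set (WeakDual 𝕜 Z)} (hU : IsOpen U)
    {g₀ : StrongDual 𝕜 Z} (hg₀ : StrongDual.toWeakDual g₀ ∈ U) :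
    ∃ W : Set (WeakDual 𝕜 X), IsOpen W ∧ StrongDual.toWeakDual (g₀ ∘L T) ∈ W ∧
      ∃ r > 0, ∀ f : StrongDual 𝕜 X, StrongDual.toWeakDual f ∈ W →
        ∀ g : StrongDual 𝕜 Z, ‖f - g ∘L T‖ < r → StrongDual.toWeakDual g ∈ U := by
  obtain ⟨J, δ, hδ, hJ⟩ := WeakDual.exists_finset_norm_sub_lt_subset hU hg₀
  choose x hx using hT
  have hN : {φ : StrongDual 𝕜 X | ∀ q ∈ J, ‖φ (x q)‖ < δ / 2} ∈ 𝓝 0 := by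
    refine IsOpen.mem_nhds ?_ fun q _ => by simpa using half_pos hδ
    simp only [Set.ofPred_forall]
    exact isOpen_biInter_finset fun q _ =>
      isOpen_lt ((ContinuousLinearMap.apply 𝕜 𝕜 (x q)).continuous.norm) continuous_const
  obtain ⟨r, hr, hrN⟩ := Metric.mem_nhds_iff.mp hN
  refine ⟨{f | ∀ q ∈ J, ‖f (x q) - g₀ q‖ < δ / 2}, ?_, fun q _ => by simpa [hx] using half_pos hδ,
    r, hr, fun f hf g hfg => hJ fun q hq => ?_⟩
  · simp only [Set.ofPred_forall]
    exact isOpen_biInter_finset fun q _ =>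
      isOpen_lt ((WeakDual.eval_continuous (x q)).sub continuous_const).norm continuous_const
  · have hsmall : ‖(g ∘L T - f) (x q)‖ < δ / 2 :=
      hrN (by rwa [mem_ball_zero_iff, norm_sub_rev]) q hq
    calc ‖g q - g₀ q‖ = ‖(g ∘L T - f) (x q) + (f (x q) - g₀ q)‖ := by simp [hx]
      _ ≤ ‖(g ∘L T - f) (x q)‖ + ‖f (x q) - g₀ q‖ := norm_add_le _ _
      _ < δ / 2 + δ / 2 := add_lt_add hsmall (hf q hq)
      _ = δ := add_halves δ

section Quotient

variable {𝕜 X F : Type*} [NontriviallyNormedField 𝕜] [NormedAddCommGroup X] [NormedSpace 𝕜 X]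
  [NormedAddCommGroup F] [NormedSpace 𝕜 F] (Y : Submodule 𝕜 X)

theorem Submodule.norm_comp_mkQL_le (g : X ⧸ Y →L[𝕜] F) : ‖g ∘L Y.mkQL‖ ≤ ‖g‖ := by
  have hQ : ‖Y.mkQL‖ ≤ 1 := ContinuousLinearMap.opNorm_le_bound _ zero_le_one fun x => by
    simpa using Submodule.Quotient.norm_mk_le Y x
  exact (g.opNorm_comp_le Y.mkQL).trans (mul_le_of_le_one_right (norm_nonneg g) hQ)

theorem Submodule.lipschitzWith_comp_mkQL :
    LipschitzWith 1 fun g : X ⧸ Y →L[𝕜] F => g ∘L Y.mkQL :=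
  LipschitzWith.of_dist_le_mul fun g₁ g₂ => by
    simpa [dist_eq_norm, ← ContinuousLinearMap.sub_comp] using Y.norm_comp_mkQL_le (g₁ - g₂)

theorem Submodule.norm_liftQL_le (f : X →L[𝕜] F) (hf : Y ≤ f.ker) : ‖Y.liftQL f hf‖ ≤ ‖f‖ := by
  let φ := (f : X →+ F).mkNormedAddGroupHom ‖f‖ f.le_opNorm
  refine ContinuousLinearMap.opNorm_le_bound _ (norm_nonneg f) fun q =>
    (QuotientAddGroup.norm_lift_apply_le (S := Y.toAddSubgroup) φ (fun y hy => hf hy) q).trans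
      (mul_le_mul_of_nonneg_right
        ((f : X →+ F).mkNormedAddGroupHom_norm_le (norm_nonneg f) f.le_opNorm) (norm_nonneg q))

end Quotient

theorem Submodule.exists_norm_sub_comp_mkQL_le {𝕜 X : Type*} [RCLike 𝕜] [NormedAddCommGroup X]
    [NormedSpace 𝕜 X] (Y : Submodule 𝕜 X) (f : StrongDual 𝕜 X) :
    ∃ g : StrongDual 𝕜 (X ⧸ Y), ‖g‖ ≤ ‖f‖ + ‖f ∘L Y.subtypeL‖ ∧
      ‖f - g ∘L Y.mkQL‖ ≤ ‖f ∘L Y.subtypeL‖ := by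
  obtain ⟨F, hFext, hFnorm⟩ := exists_extension_norm_eq Y (f ∘L Y.subtypeL)
  have hker : Y ≤ (f - F).ker := fun y hy => by simp [hFext ⟨y, hy⟩]
  refine ⟨Y.liftQL (f - F) hker, ?_, ?_⟩
  · calc ‖Y.liftQL (f - F) hker‖ ≤ ‖f - F‖ := Y.norm_liftQL_le _ _
      _ ≤ ‖f‖ + ‖F‖ := norm_sub_le _ _
      _ = ‖f‖ + ‖f ∘L Y.subtypeL‖ := by rw [hFnorm]
  · have : f - Y.liftQL (f - F) hker ∘L Y.mkQL = F := by ext x; simp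
    rw [this, hFnorm]

theorem Submodule.exists_norm_le_one_norm_sub_comp_mkQL_le {X : Type*} [NormedAddCommGroup X]
    [NormedSpace ℝ X] (Y : Submodule ℝ X) {f : StrongDual ℝ X} (hf : ‖f‖ ≤ 1) :
    ∃ g : StrongDual ℝ (X ⧸ Y), ‖g‖ ≤ 1 ∧ ‖f - g ∘L Y.mkQL‖ ≤ 2 * ‖f ∘L Y.subtypeL‖ := by
  set r := f ∘L Y.subtypeL
  obtain ⟨g₁, hg₁, hfg₁⟩ := Y.exists_norm_sub_comp_mkQL_le f
  obtain ⟨g, hg, hg₁g⟩ := exists_norm_le_one_norm_sub_le (x := g₁) (norm_nonneg r) (by linarith)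
  refine ⟨g, hg, ?_⟩
  calc ‖f - g ∘L Y.mkQL‖ = ‖(f - g₁ ∘L Y.mkQL) + (g₁ - g) ∘L Y.mkQL‖ := by
        rw [ContinuousLinearMap.sub_comp, sub_add_sub_cancel]
    _ ≤ ‖f - g₁ ∘L Y.mkQL‖ + ‖g₁ - g‖ := norm_add_le_of_le le_rfl (Y.norm_comp_mkQL_le _)
    _ ≤ 2 * ‖r‖ := by linarith

section Rough

variable {Z : Type*} [NormedAddCommGroup Z] [NormedSpace ℝ Z]

theorem IsRelWStarOpen.isBounded {V : Set (StrongDual ℝ Z)} (hV : IsRelWStarOpen Z V) :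
    Bornology.IsBounded V := by
  obtain ⟨U, -, rfl⟩ := hV
  exact isBounded_closedBall.subset fun f hf => hf.1

variable (Z) in
theorem weaklyAvgNonRough_iff_wStarBHP : WeaklyAvgNonRough Z ↔ WStarBHP Z := by
  simp only [WeaklyAvgNonRough, WeaklyEpsAvgRough, WStarBHP]
  push Not
  rfl

end Rough

theorem Submodule.exists_isRelWStarOpen_forall_exists_norm_sub_comp_mkQL_lt {X : Type*}
    [NormedAddCommGroup X] [NormedSpace ℝ X] (Y : Submodule ℝ X) [IsClosed (Y : Set X)]
    [ProperSpace Y] {V : Set (StrongDual ℝ (X ⧸ Y))} (hV : IsRelWStarOpen (X ⧸ Y) V)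
    (hne : V.Nonempty) {r : ℝ} (hr : 0 < r) :
    ∃ V' : Set (StrongDual ℝ X), IsRelWStarOpen X V' ∧ V'.Nonempty ∧
      ∀ f ∈ V', ∃ g ∈ V, ‖f - g ∘L Y.mkQL‖ < r := by
  obtain ⟨U, hU, rfl⟩ := hV
  obtain ⟨g₀, hg₀, hg₀U⟩ := hne
  obtain ⟨W, hW, hg₀W, s, hs, hWU⟩ :=
    exists_isOpen_forall_norm_sub_comp_lt_imp_mem (T := Y.mkQL) Y.mkQ_surjective hU hg₀U
  set ρ := min r s
  have hρ : 0 < ρ := lt_min hr hs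
  obtain ⟨t, ht, hnet⟩ :=
    exists_finite_forall_norm_lt_imp_norm_le (E := Y) (by positivity : 0 < ρ / 8)
  refine ⟨{f | f ∈ closedBall 0 1 ∧
      StrongDual.toWeakDual f ∈ W ∩ ⋂ y ∈ t, {f | ‖f (y : X)‖ < ρ / 8}},
    ⟨_, hW.inter (ht.isOpen_biInter fun y _ =>
      isOpen_lt (WeakDual.eval_continuous _).norm continuous_const), rfl⟩,
    ⟨g₀ ∘L Y.mkQL, ?_, hg₀W, ?_⟩, ?_⟩
  · exact mem_closedBall_zero_iff.2 ((Y.norm_comp_mkQL_le g₀).trans (mem_closedBall_zero_iff.1 hg₀))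
  · exact Set.mem_iInter₂.2 fun y _ => by simp [(Submodule.Quotient.mk_eq_zero Y).2 y.2, hρ]
  · rintro f ⟨hf, hfW, hft⟩
    have hfY : ‖f ∘L Y.subtypeL‖ ≤ 2 * (ρ / 8) := by
      refine hnet _ ?_ fun y hy => ?_
      · exact (f.opNorm_comp_le _).trans
          (mul_le_one₀ (mem_closedBall_zero_iff.1 hf) (norm_nonneg _) Y.norm_subtypeL_le)
      · exact Set.mem_iInter₂.1 hft y hy
    obtain ⟨g, hg, hfg⟩ := Y.exists_norm_le_one_norm_sub_comp_mkQL_le (mem_closedBall_zero_iff.1 hf)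
    have hfgρ : ‖f - g ∘L Y.mkQL‖ < ρ := by linarith
    exact ⟨g, ⟨mem_closedBall_zero_iff.2 hg, hWU f hfW g (hfgρ.trans_le (min_le_right _ _))⟩,
      hfgρ.trans_le (min_le_left _ _)⟩

theorem statement_17_general (X : Type*) [NormedAddCommGroup X] [NormedSpace ℝ X]
    (Y : Submodule ℝ X) [FiniteDimensional ℝ Y] :
    letI : IsClosed (Y : Set X) := Y.closed_of_finiteDimensional
    WeaklyAvgNonRough (X ⧸ Y) → WeaklyAvgNonRough X := by
  have : IsClosed (Y : Set X) := Y.closed_of_finiteDimensional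
  simp only [weaklyAvgNonRough_iff_wStarBHP]
  intro hQ ε hε
  obtain ⟨V, hV, hne, hdiam⟩ := hQ (ε / 2) (half_pos hε)
  obtain ⟨V', hV', hne', happrox⟩ :=
    Y.exists_isRelWStarOpen_forall_exists_norm_sub_comp_mkQL_lt hV hne (by positivity : 0 < ε / 8)
  have hdiam' : diam V' ≤ diam V + 2 * (ε / 8) :=
    diam_le_of_forall_exists_dist_le Y.lipschitzWith_comp_mkQL hV.isBounded (by positivity)
      fun f hf => (happrox f hf).imp fun g ⟨hg, hfg⟩ =>
        ⟨hg, (dist_eq_norm _ _).trans_le hfg.le⟩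
  exact ⟨V', hV', hne', by linarith⟩

/-- If `Y` is a finite-dimensional subspace of a Banach space `X` and the norm of
`X/Y` is weakly average non rough, then the norm of `X` is weakly average non rough. -/
theorem statement_17 (X : Type*) [NormedAddCommGroup X] [NormedSpace ℝ X] [CompleteSpace X]
    (Y : Submodule ℝ X) [FiniteDimensional ℝ Y] :
    letI : IsClosed (Y : Set X) := Y.closed_of_finiteDimensional
    WeaklyAvgNonRough (X ⧸ Y) → WeaklyAvgNonRough X :=
  statement_17_general X Y
end
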